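/- Let (U,V) be a nonnegative bivariate random vector with joint moment generating function M(u,v) = E[exp(uU + vV)] defined for nonpositive arguments, and let γ₁ : ℝ^d → [0,∞) and γ₂ : ℝ^k → [0,∞) be continuous variograms (conditionally negative definite functions vanishing at 0). Then ρ(s, ξ) = M(−γ₁(s), −γ₂(ξ)) is a valid correlation function, i.e., ρ(0,0) = 1 and ρ is positive semidefinite on ℝ^d × ℝ^k. -/

import Mathlib

/-!
For fixed `ω` the kernel `exp (-γ₁ (sᵢ - sⱼ) U ω - γ₂ (ξᵢ - ξⱼ) V ω)` is the Hadamard product of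
two kernels `exp (-u γ (xᵢ - xⱼ))` with `u ≥ 0`. These are positive semidefinite by Schoenberg's
argument: conditional negative definiteness of `γ`, tested at the points `xᵢ` together with `0`,
makes `γ xᵢ + γ xⱼ - γ (xᵢ - xⱼ)` positive semidefinite; entrywise exponentiation preserves this
(a limit of nonnegative combinations of Hadamard powers, by the Schur product theorem), and a
diagonal congruence by `exp (-u γ xᵢ)` turns the result into `exp (-u γ (xᵢ - xⱼ))`. Integrating
over `ω` keeps the quadratic form nonnegative.
-/

open MeasureTheory

/-- A (centered) variogram: a continuous, nonnegative, conditionally negative definite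
function vanishing at the origin. -/
def IsVariogram {d : ℕ} (γ : (Fin d → ℝ) → ℝ) : Prop :=
  Continuous γ ∧ γ 0 = 0 ∧ (∀ s, 0 ≤ γ s) ∧ (∀ s, γ (-s) = γ s) ∧
    ∀ (n : ℕ) (x : Fin n → (Fin d → ℝ)) (a : Fin n → ℝ),
      (∑ i, a i) = 0 → ∑ i, ∑ j, a i * a j * γ (x i - x j) ≤ 0

open Matrix

namespace Matrix

variable {n : Type*}

theorem isClosed_setOf_posSemidef {R : Type*} [Ring R] [PartialOrder R] [StarRing R]
    [TopologicalSpace R] [IsTopologicalRing R] [ContinuousStar R] [OrderClosedTopology R] :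
    IsClosed {M : Matrix n n R | M.PosSemidef} := by
  simp only [PosSemidef, Set.ofPred_and, Set.ofPred_forall]
  refine (isClosed_eq (by fun_prop) continuous_id).inter
    (isClosed_iInter fun x => isClosed_le continuous_const ?_)
  simp only [Finsupp.sum]
  fun_prop

theorem PosSemidef.map_pow [Finite n] {A : Matrix n n ℝ} (hA : A.PosSemidef) (p : ℕ) :
    (A.map (· ^ p)).PosSemidef := by
  induction p with
  | zero => convert posSemidef_vecMulVec_self_star (1 : n → ℝ) using 1; ext; simp
  | succ p ih =>
    rw [show A.map (· ^ (p + 1)) = A.map (· ^ p) ⊙ A by ext; simp [pow_succ]]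
    exact ih.hadamard hA

theorem PosSemidef.map_exp [Finite n] {A : Matrix n n ℝ} (hA : A.PosSemidef) :
    (A.map Real.exp).PosSemidef := by
  have hsum : HasSum (fun p : ℕ => (p.factorial : ℝ)⁻¹ • A.map (· ^ p)) (A.map Real.exp) :=
    Pi.hasSum.2 fun i => Pi.hasSum.2 fun j => by
      simpa [Real.exp_eq_exp_ℝ, div_eq_inv_mul] using NormedSpace.expSeries_div_hasSum_exp (A i j)
  refine isClosed_setOf_posSemidef.mem_of_tendsto hsum.tendsto_sum_nat
    (Filter.Eventually.of_forall fun N => posSemidef_sum _ fun p _ => ?_)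
  exact (hA.map_pow p).smul (by positivity)

variable [Fintype n]

theorem posSemidef_iff_sum_mul_mul_nonneg {A : Matrix n n ℝ} :
    A.PosSemidef ↔ A.IsHermitian ∧ ∀ a : n → ℝ, 0 ≤ ∑ i, ∑ j, a i * a j * A i j := by
  have hquad : ∀ a : n → ℝ, star a ⬝ᵥ A *ᵥ a = ∑ i, ∑ j, a i * a j * A i j := fun a => by
    simp only [dotProduct, mulVec, star_trivial, Finset.mul_sum]
    exact Finset.sum_congr rfl fun i _ => Finset.sum_congr rfl fun j _ => by ring
  simp only [posSemidef_iff_dotProduct_mulVec, hquad]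

theorem posSemidef_integral {Ω : Type*} [MeasurableSpace Ω] {μ : Measure Ω}
    {K : Ω → Matrix n n ℝ} (hint : ∀ i j, Integrable (fun ω => K ω i j) μ)
    (hK : ∀ᵐ ω ∂μ, (K ω).PosSemidef) :
    (of fun i j => ∫ ω, K ω i j ∂μ).PosSemidef := by
  simp only [posSemidef_iff_sum_mul_mul_nonneg] at hK ⊢
  refine ⟨?_, fun a => ?_⟩
  · ext i j
    exact integral_congr_ae (hK.mono fun ω hω => congrFun₂ hω.1 i j)
  · have hquad : ∑ i, ∑ j, a i * a j * of (fun i j => ∫ ω, K ω i j ∂μ) i j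
        = ∫ ω, ∑ i, ∑ j, a i * a j * K ω i j ∂μ := by
      rw [integral_finsetSum _ fun i _ => integrable_finsetSum _ fun j _ => (hint i j).const_mul _]
      simp only [of_apply, ← integral_const_mul]
      exact Finset.sum_congr rfl fun i _ =>
        (integral_finsetSum _ fun j _ => (hint i j).const_mul _).symm
    rw [hquad]
    exact integral_nonneg_of_ae (hK.mono fun ω hω => hω.2 a)

end Matrix

def ConditionallyNegativeDefinite {E : Type*} [AddGroup E] (γ : E → ℝ) : Prop :=
  ∀ (n : ℕ) (x : Fin n → E) (a : Fin n → ℝ),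
    ∑ i, a i = 0 → ∑ i, ∑ j, a i * a j * γ (x i - x j) ≤ 0

namespace ConditionallyNegativeDefinite

variable {E : Type*} [AddGroup E] {γ : E → ℝ}

theorem posSemidef_add_sub (hγ : ConditionallyNegativeDefinite γ) (h0 : γ 0 = 0)
    (hneg : ∀ x, γ (-x) = γ x) {n : ℕ} (x : Fin n → E) :
    (of fun i j => γ (x i) + γ (x j) - γ (x i - x j)).PosSemidef := by
  refine posSemidef_iff_sum_mul_mul_nonneg.2 ⟨?_, fun a => ?_⟩
  · ext i j
    simp only [conjTranspose_apply, of_apply, star_trivial]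
    rw [← neg_sub (x i), hneg]
    ring
  · -- Adjoin the point `0` with weight `-∑ aᵢ` to reach a family of total weight zero.
    have h := hγ (n + 1) (Fin.cons 0 x) (Fin.cons (-∑ i, a i) a)
      (by simp only [Fin.sum_univ_succ, Fin.cons_zero, Fin.cons_succ, neg_add_cancel])
    simp only [Fin.sum_univ_succ, Fin.cons_zero, mul_neg, sub_zero, neg_mul, Fin.cons_succ,
      Finset.sum_add_distrib, Finset.sum_neg_distrib, h0, mul_zero, zero_add, zero_sub, hneg,
      neg_add_le_iff_le_add, add_zero, of_apply, mul_sub, mul_add, Finset.sum_sub_distrib,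
      sub_nonneg] at h ⊢
    refine h.trans_eq ?_
    simp only [Finset.mul_sum, Finset.sum_mul]
    rw [add_comm, Finset.sum_comm (f := fun i j => a i * a j * γ (x j))]

theorem posSemidef_exp_neg_mul (hγ : ConditionallyNegativeDefinite γ) (h0 : γ 0 = 0)
    (hneg : ∀ x, γ (-x) = γ x) {u : ℝ} (hu : 0 ≤ u) {n : ℕ} (x : Fin n → E) :
    (of fun i j => Real.exp (-(u * γ (x i - x j)))).PosSemidef := by
  set c : Fin n → ℝ := fun i => Real.exp (-(u * γ (x i)))
  have heq : of (fun i j => Real.exp (-(u * γ (x i - x j))))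
      = (u • of fun i j => γ (x i) + γ (x j) - γ (x i - x j)).map Real.exp
        ⊙ vecMulVec c (star c) := by
    ext i j
    simp only [of_apply, hadamard_apply, map_apply, Matrix.smul_apply, vecMulVec_apply,
      star_trivial, smul_eq_mul, c, ← Real.exp_add]
    ring_nf
  rw [heq]
  exact ((hγ.posSemidef_add_sub h0 hneg x).smul hu).map_exp.hadamard
    (posSemidef_vecMulVec_self_star c)

end ConditionallyNegativeDefinite

theorem IsVariogram.posSemidef_exp_neg_mul {d : ℕ} {γ : (Fin d → ℝ) → ℝ} (hγ : IsVariogram γ)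
    {u : ℝ} (hu : 0 ≤ u) {n : ℕ} (x : Fin n → Fin d → ℝ) :
    (of fun i j => Real.exp (-(u * γ (x i - x j)))).PosSemidef :=
  let ⟨_, h0, _, hneg, hcnd⟩ := hγ
  ConditionallyNegativeDefinite.posSemidef_exp_neg_mul hcnd h0 hneg hu x

theorem mixture_mgf_is_correlation_general {d k : ℕ}
    {Ω : Type*} [MeasurableSpace Ω] (μ : Measure Ω) [IsProbabilityMeasure μ]
    (U V : Ω → ℝ)
    (hUpos : ∀ ω, 0 ≤ U ω) (hVpos : ∀ ω, 0 ≤ V ω)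
    (hInt : ∀ u v : ℝ, u ≤ 0 → v ≤ 0 →
      Integrable (fun ω => Real.exp (u * U ω + v * V ω)) μ)
    (γ₁ : (Fin d → ℝ) → ℝ) (γ₂ : (Fin k → ℝ) → ℝ)
    (hγ₁ : IsVariogram γ₁) (hγ₂ : IsVariogram γ₂)
    (ρ : (Fin d → ℝ) → (Fin k → ℝ) → ℝ)
    (hρ : ∀ s ξ, ρ s ξ = ∫ ω, Real.exp ((-γ₁ s) * U ω + (-γ₂ ξ) * V ω) ∂μ) :
    ρ 0 0 = 1 ∧
      ∀ (n : ℕ) (s : Fin n → (Fin d → ℝ)) (ξ : Fin n → (Fin k → ℝ)) (a : Fin n → ℝ),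
        0 ≤ ∑ i, ∑ j, a i * a j * ρ (s i - s j) (ξ i - ξ j) := by
  have ⟨_, h₁0, h₁nonneg, _⟩ := hγ₁
  have ⟨_, h₂0, h₂nonneg, _⟩ := hγ₂
  refine ⟨by simp [hρ, h₁0, h₂0], fun n s ξ a => ?_⟩
  have hK : ∀ ω, (of fun i j =>
      Real.exp (-γ₁ (s i - s j) * U ω + -γ₂ (ξ i - ξ j) * V ω)).PosSemidef := fun ω => by
    have heq : (of fun i j => Real.exp (-γ₁ (s i - s j) * U ω + -γ₂ (ξ i - ξ j) * V ω))
        = (of fun i j => Real.exp (-(U ω * γ₁ (s i - s j))))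
          ⊙ of fun i j => Real.exp (-(V ω * γ₂ (ξ i - ξ j))) := by
      ext i j
      simp only [of_apply, hadamard_apply, ← Real.exp_add]
      ring_nf
    rw [heq]
    exact (hγ₁.posSemidef_exp_neg_mul (hUpos ω) s).hadamard
      (hγ₂.posSemidef_exp_neg_mul (hVpos ω) ξ)
  have hρK := (posSemidef_iff_sum_mul_mul_nonneg.1 (posSemidef_integral
    (fun i j => hInt _ _ (neg_nonpos.2 (h₁nonneg _)) (neg_nonpos.2 (h₂nonneg _)))
    (ae_of_all μ hK))).2 a
  simpa only [of_apply, ← hρ] using hρK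

/-- Let `(U, V)` be a nonnegative bivariate random vector with joint moment generating
function `M(u,v) = E[exp(uU + vV)]` (finite for nonpositive arguments), and let
`γ₁, γ₂` be continuous variograms.  Then `ρ(s, ξ) = M(-γ₁ s, -γ₂ ξ)` is a valid
correlation function: `ρ 0 0 = 1` and `ρ` is positive semidefinite on the product space. -/
theorem mixture_mgf_is_correlation {d k : ℕ}
    {Ω : Type*} [MeasurableSpace Ω] (μ : Measure Ω) [IsProbabilityMeasure μ]
    (U V : Ω → ℝ) (hU : Measurable U) (hV : Measurable V)
    (hUpos : ∀ ω, 0 ≤ U ω) (hVpos : ∀ ω, 0 ≤ V ω)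
    (hInt : ∀ u v : ℝ, u ≤ 0 → v ≤ 0 →
      Integrable (fun ω => Real.exp (u * U ω + v * V ω)) μ)
    (γ₁ : (Fin d → ℝ) → ℝ) (γ₂ : (Fin k → ℝ) → ℝ)
    (hγ₁ : IsVariogram γ₁) (hγ₂ : IsVariogram γ₂)
    (ρ : (Fin d → ℝ) → (Fin k → ℝ) → ℝ)
    (hρ : ∀ s ξ, ρ s ξ = ∫ ω, Real.exp ((-γ₁ s) * U ω + (-γ₂ ξ) * V ω) ∂μ) :
    ρ 0 0 = 1 ∧
      ∀ (n : ℕ) (s : Fin n → (Fin d → ℝ)) (ξ : Fin n → (Fin k → ℝ)) (a : Fin n → ℝ),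
        0 ≤ ∑ i, ∑ j, a i * a j * ρ (s i - s j) (ξ i - ξ j) :=
  mixture_mgf_is_correlation_general μ U V hUpos hVpos hInt γ₁ γ₂ hγ₁ hγ₂ ρ hρ
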